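/- With the observables A_{1,0} = (X+Z)/√2, A_{1,1} = (X−Z)/√2, A_{1,2} = Y, and A_{i,0} = Z, A_{i,1} = X, A_{i,2} = Y for i = 2,…,N, the Bell expression I_l evaluated on the GHZ-type state |φ_l⟩ = (|l₁…l_N⟩ + (−1)^{l₁}|l̄₁…l̄_N⟩)/√2 equals 3(N−1), for every binary string l. -/

import Mathlib

open Matrix

namespace Stmt6

def X : Matrix (Fin 2) (Fin 2) ℂ := !![0, 1; 1, 0]
def Y : Matrix (Fin 2) (Fin 2) ℂ := !![0, -Complex.I; Complex.I, 0]
def Z : Matrix (Fin 2) (Fin 2) ℂ := !![1, 0; 0, -1]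

/-- Tensor product over the `N` qubits of the one-qubit matrices `f i`. -/
def tens {N : ℕ} (f : Fin N → Matrix (Fin 2) (Fin 2) ℂ) :
    Matrix (Fin N → Fin 2) (Fin N → Fin 2) ℂ :=
  fun s t => ∏ i, f i (s i) (t i)

def e {N : ℕ} (l : Fin N → Fin 2) : (Fin N → Fin 2) → ℂ := fun s => if s = l then 1 else 0

/-- The GHZ-type vector `|φ_l⟩`. -/
noncomputable def φ {N : ℕ} (h : 0 < N) (l : Fin N → Fin 2) : (Fin N → Fin 2) → ℂ :=
  ((Real.sqrt 2 : ℂ))⁻¹ •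
    (e l + ((-1 : ℂ) ^ (l ⟨0, h⟩ : ℕ)) • e (fun i => 1 - l i))

/-- `⟨φ| M |φ⟩`. -/
noncomputable def expval {N : ℕ} (h : 0 < N) (l : Fin N → Fin 2)
    (M : Matrix (Fin N → Fin 2) (Fin N → Fin 2) ℂ) : ℂ :=
  star (φ h l) ⬝ᵥ (M *ᵥ φ h l)

lemma X_diag (b : Fin 2) : X b b = 0 := by fin_cases b <;> simp [X]
lemma X_off (b : Fin 2) : X b (1 - b) = 1 := by fin_cases b <;> simp [X]
lemma X_off' (b : Fin 2) : X (1 - b) b = 1 := by fin_cases b <;> simp [X]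
lemma Z_diag (b : Fin 2) : Z b b = (-1 : ℂ) ^ (b : ℕ) := by fin_cases b <;> simp [Z]
lemma Z_diag' (b : Fin 2) : Z (1 - b) (1 - b) = (-1 : ℂ) ^ ((b : ℕ) + 1) := by
  fin_cases b <;> simp [Z]
lemma Z_off (b : Fin 2) : Z b (1 - b) = 0 := by fin_cases b <;> simp [Z]
lemma Z_off' (b : Fin 2) : Z (1 - b) b = 0 := by fin_cases b <;> simp [Z]
lemma Y_diag (b : Fin 2) : Y b b = 0 := by fin_cases b <;> simp [Y]
lemma Y_diag' (b : Fin 2) : Y (1 - b) (1 - b) = 0 := by fin_cases b <;> simp [Y]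
lemma Y_off (b : Fin 2) : Y b (1 - b) = (-1 : ℂ) ^ ((b : ℕ) + 1) * Complex.I := by
  fin_cases b <;> simp [Y]
lemma Y_off' (b : Fin 2) : Y (1 - b) b = (-1 : ℂ) ^ (b : ℕ) * Complex.I := by
  fin_cases b <;> simp [Y]
lemma one_off (b : Fin 2) : (1 : Matrix (Fin 2) (Fin 2) ℂ) b (1 - b) = 0 := by
  fin_cases b <;> simp [Matrix.one_apply]
lemma one_off' (b : Fin 2) : (1 : Matrix (Fin 2) (Fin 2) ℂ) (1 - b) b = 0 := by
  fin_cases b <;> simp [Matrix.one_apply]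
lemma bit_ne (b : Fin 2) : b ≠ 1 - b := by fin_cases b <;> decide

lemma star_phi {N : ℕ} (h : 0 < N) (l : Fin N → Fin 2) : star (φ h l) = φ h l := by
  funext s
  simp only [φ, e, Pi.star_apply, Pi.smul_apply, Pi.add_apply, smul_eq_mul, star_mul',
    RCLike.star_def, map_inv₀, Complex.conj_ofReal, map_add, _root_.map_mul, map_pow,
    map_neg, _root_.map_one]
  rw [apply_ite (starRingEnd ℂ), apply_ite (starRingEnd ℂ)]
  simp

lemma expval_formula {N : ℕ} (h : 0 < N) (l : Fin N → Fin 2)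
    (M : Matrix (Fin N → Fin 2) (Fin N → Fin 2) ℂ) :
    expval h l M = (2 : ℂ)⁻¹ * (M l l + M (fun i => 1 - l i) (fun i => 1 - l i) +
      (-1 : ℂ) ^ (l ⟨0, h⟩ : ℕ) * (M l (fun i => 1 - l i) + M (fun i => 1 - l i) l)) := by
  have hne : l ≠ (fun i => 1 - l i) := by
    intro H; exact bit_ne (l ⟨0, h⟩) (congrFun H ⟨0, h⟩)
  have hne' : (fun i => 1 - l i) ≠ l := hne.symm
  have ha : ((Real.sqrt 2 : ℂ))⁻¹ * ((Real.sqrt 2 : ℂ))⁻¹ = (2 : ℂ)⁻¹ := by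
    rw [← mul_inv, ← Complex.ofReal_mul, Real.mul_self_sqrt (by norm_num)]
    norm_num
  rw [expval, star_phi]
  simp only [φ, e, dotProduct, mulVec, Pi.smul_apply, Pi.add_apply, smul_eq_mul]
  simp only [mul_ite, ite_mul, mul_one, mul_zero, zero_mul, one_mul, mul_add, add_mul,
    Finset.sum_add_distrib, Finset.sum_ite_eq', Finset.mem_univ, if_true, hne, hne',
    if_false, Finset.mul_sum]
  have h1 : ((Real.sqrt 2 : ℂ))⁻¹ ^ 2 = 1 / 2 := by rw [sq, ha]; norm_num
  have h2 : (-1 : ℂ) ^ ((l ⟨0, h⟩ : ℕ) * 2) = 1 := by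
    rw [mul_comm, pow_mul]; norm_num
  ring_nf
  rw [h1, h2]
  ring

lemma prod_support_two {N : ℕ} {z i : Fin N} (hzi : z ≠ i) (g : Fin N → ℂ)
    (hg : ∀ j, j ≠ z → j ≠ i → g j = 1) : ∏ j, g j = g z * g i := by
  rw [← Finset.prod_pair hzi]
  refine (Finset.prod_subset (Finset.subset_univ _) fun x _ hx => ?_).symm
  simp only [Finset.mem_insert, Finset.mem_singleton, not_or] at hx
  exact hg x hx.1 hx.2

lemma expval_X {N : ℕ} (h : 0 < N) (l : Fin N → Fin 2) :
    expval h l (tens fun _ => X) = (-1 : ℂ) ^ (l ⟨0, h⟩ : ℕ) := by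
  rw [expval_formula]
  have d1 : tens (fun _ : Fin N => X) l l = 0 :=
    Finset.prod_eq_zero (Finset.mem_univ ⟨0, h⟩) (X_diag _)
  have d2 : tens (fun _ : Fin N => X) (fun i => 1 - l i) (fun i => 1 - l i) = 0 :=
    Finset.prod_eq_zero (Finset.mem_univ ⟨0, h⟩) (X_diag _)
  have o1 : tens (fun _ : Fin N => X) l (fun i => 1 - l i) = 1 :=
    Finset.prod_eq_one fun j _ => X_off (l j)
  have o2 : tens (fun _ : Fin N => X) (fun i => 1 - l i) l = 1 :=
    Finset.prod_eq_one fun j _ => X_off' (l j)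
  rw [d1, d2, o1, o2]
  ring

lemma expval_ZZ {N : ℕ} (h : 0 < N) (l : Fin N → Fin 2) {z i : Fin N} (hz : z = ⟨0, h⟩)
    (hi : i ≠ z) :
    expval h l (tens fun j => if j = z then Z else if j = i then Z else 1) =
      (-1 : ℂ) ^ ((l z : ℕ) + (l i : ℕ)) := by
  have hzi : z ≠ i := hi.symm
  rw [expval_formula]
  have o1 : tens (fun j : Fin N => if j = z then Z else if j = i then Z else 1)
      l (fun i => 1 - l i) = 0 := by
    refine Finset.prod_eq_zero (Finset.mem_univ z) ?_
    simp [Z_off]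
  have o2 : tens (fun j : Fin N => if j = z then Z else if j = i then Z else 1)
      (fun i => 1 - l i) l = 0 := by
    refine Finset.prod_eq_zero (Finset.mem_univ z) ?_
    simp [Z_off']
  have d1 : tens (fun j : Fin N => if j = z then Z else if j = i then Z else 1) l l =
      (-1 : ℂ) ^ (l z : ℕ) * (-1 : ℂ) ^ (l i : ℕ) := by
    rw [tens, prod_support_two hzi]
    · simp [hi, Z_diag]
    · intro j hj1 hj2
      simp [hj1, hj2]
  have d2 : tens (fun j : Fin N => if j = z then Z else if j = i then Z else 1)
      (fun i => 1 - l i) (fun i => 1 - l i) =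
      (-1 : ℂ) ^ ((l z : ℕ) + 1) * (-1 : ℂ) ^ ((l i : ℕ) + 1) := by
    rw [tens, prod_support_two hzi]
    · simp [hi, Z_diag']
    · intro j hj1 hj2
      simp [hj1, hj2]
  rw [d1, d2, o1, o2, pow_succ, pow_succ, pow_add]
  ring

lemma expval_YY {N : ℕ} (h : 0 < N) (l : Fin N → Fin 2) {z i : Fin N} (hz : z = ⟨0, h⟩)
    (hi : i ≠ z) :
    expval h l (tens fun j => if j = z then Y else if j = i then Y else X) =
      -(-1 : ℂ) ^ (l i : ℕ) := by
  have hzi : z ≠ i := hi.symm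
  rw [expval_formula]
  have d1 : tens (fun j : Fin N => if j = z then Y else if j = i then Y else X) l l = 0 := by
    refine Finset.prod_eq_zero (Finset.mem_univ z) ?_
    simp [Y_diag]
  have d2 : tens (fun j : Fin N => if j = z then Y else if j = i then Y else X)
      (fun i => 1 - l i) (fun i => 1 - l i) = 0 := by
    refine Finset.prod_eq_zero (Finset.mem_univ z) ?_
    simp [Y_diag']
  have o1 : tens (fun j : Fin N => if j = z then Y else if j = i then Y else X)
      l (fun i => 1 - l i) =
      ((-1 : ℂ) ^ ((l z : ℕ) + 1) * Complex.I) * ((-1 : ℂ) ^ ((l i : ℕ) + 1) * Complex.I) := by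
    rw [tens, prod_support_two hzi]
    · simp [hi, Y_off]
    · intro j hj1 hj2
      simp [hj1, hj2, X_off]
  have o2 : tens (fun j : Fin N => if j = z then Y else if j = i then Y else X)
      (fun i => 1 - l i) l =
      ((-1 : ℂ) ^ (l z : ℕ) * Complex.I) * ((-1 : ℂ) ^ (l i : ℕ) * Complex.I) := by
    rw [tens, prod_support_two hzi]
    · simp [hi, Y_off']
    · intro j hj1 hj2
      simp [hj1, hj2, X_off']
  rw [d1, d2, o1, o2, ← hz]
  have hI : Complex.I * Complex.I = -1 := by
    rw [← Complex.I_sq, sq]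
  have key : ∀ m n : ℕ, ((-1 : ℂ) ^ (m + 1) * Complex.I) * ((-1 : ℂ) ^ (n + 1) * Complex.I)
      = -((-1 : ℂ) ^ m * (-1 : ℂ) ^ n) := by
    intro m n
    rw [pow_succ, pow_succ]
    ring_nf
    rw [Complex.I_sq]
    ring
  rw [key]
  have key2 : ((-1 : ℂ) ^ (l z : ℕ) * Complex.I) * ((-1 : ℂ) ^ (l i : ℕ) * Complex.I)
      = -((-1 : ℂ) ^ (l z : ℕ) * (-1 : ℂ) ^ (l i : ℕ)) := by
    ring_nf
    rw [Complex.I_sq]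
    ring
  rw [key2]
  have key3 : (-1 : ℂ) ^ (l z : ℕ) * (-1 : ℂ) ^ (l z : ℕ) = 1 := by
    rw [← pow_add, ← two_mul, pow_mul]; norm_num
  calc (2 : ℂ)⁻¹ * (0 + 0 + (-1 : ℂ) ^ (l z : ℕ) *
        (-((-1 : ℂ) ^ (l z : ℕ) * (-1 : ℂ) ^ (l i : ℕ)) +
          -((-1 : ℂ) ^ (l z : ℕ) * (-1 : ℂ) ^ (l i : ℕ))))
      = -(((-1 : ℂ) ^ (l z : ℕ) * (-1 : ℂ) ^ (l z : ℕ)) * (-1 : ℂ) ^ (l i : ℕ)) := by ring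
    _ = -(-1 : ℂ) ^ (l i : ℕ) := by rw [key3]; ring


/-- With the ideal observables `A_{1,0}=(X+Z)/√2`, `A_{1,1}=(X−Z)/√2`, `A_{1,2}=Y`,
`A_{i,0}=Z`, `A_{i,1}=X`, `A_{i,2}=Y` (so that `Ã₁₁ = X₁` and `Ã₁₀ = Z₁`), the Bell
expression `I_l` on the GHZ state `|φ_l⟩` equals `3(N−1)`, for every bit string `l`. -/
theorem stmt_6 (N : ℕ) (hN : 2 ≤ N) (l : Fin N → Fin 2) (z : Fin N) (hz : z = ⟨0, by omega⟩) :
    ((N - 1 : ℂ) * (-1 : ℂ) ^ (l z : ℕ)) * expval (by omega) l (tens fun _ => X)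
      + (∑ i ∈ Finset.univ.erase z, ((-1 : ℂ) ^ ((l z : ℕ) + (l i : ℕ))) *
          expval (by omega) l (tens fun j => if j = z then Z else if j = i then Z else 1))
      - (∑ i ∈ Finset.univ.erase z, ((-1 : ℂ) ^ (l i : ℕ)) *
          expval (by omega) l (tens fun j => if j = z then Y else if j = i then Y else X))
      = 3 * (N - 1 : ℂ) := by
  have h : 0 < N := by omega
  have hz0 : z = (⟨0, h⟩ : Fin N) := hz
  have hsq : ∀ n : ℕ, (-1 : ℂ) ^ n * (-1 : ℂ) ^ n = 1 := by
    intro n; rw [← pow_add, ← two_mul, pow_mul]; norm_num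
  have hcard : (Finset.univ.erase z).card = N - 1 := by
    rw [Finset.card_erase_of_mem (Finset.mem_univ z), Finset.card_univ, Fintype.card_fin]
  have hs1 : (∑ i ∈ Finset.univ.erase z, ((-1 : ℂ) ^ ((l z : ℕ) + (l i : ℕ))) *
      expval h l (tens fun j => if j = z then Z else if j = i then Z else 1)) = (N : ℂ) - 1 := by
    have step : ∀ i ∈ Finset.univ.erase z, ((-1 : ℂ) ^ ((l z : ℕ) + (l i : ℕ))) *
        expval h l (tens fun j => if j = z then Z else if j = i then Z else 1) = 1 := by
      intro i hi
      rw [expval_ZZ h l hz0 (Finset.ne_of_mem_erase hi), hsq]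
    rw [Finset.sum_congr rfl step, Finset.sum_const, hcard, nsmul_eq_mul, mul_one,
      Nat.cast_sub (by omega), Nat.cast_one]
  have hs2 : (∑ i ∈ Finset.univ.erase z, ((-1 : ℂ) ^ (l i : ℕ)) *
      expval h l (tens fun j => if j = z then Y else if j = i then Y else X)) =
      -((N : ℂ) - 1) := by
    have step : ∀ i ∈ Finset.univ.erase z, ((-1 : ℂ) ^ (l i : ℕ)) *
        expval h l (tens fun j => if j = z then Y else if j = i then Y else X) = -1 := by
      intro i hi
      rw [expval_YY h l hz0 (Finset.ne_of_mem_erase hi), mul_neg, hsq]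
    rw [Finset.sum_congr rfl step, Finset.sum_const, hcard, nsmul_eq_mul,
      Nat.cast_sub (by omega), Nat.cast_one]
    ring
  rw [show (expval (Nat.lt_of_lt_of_le Nat.zero_lt_two hN) : _) = expval h from rfl] at *
  rw [expval_X h l, ← hz0, hs1, hs2, mul_assoc, hsq]
  ring

end Stmt6
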